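/- Let X and Y be independent exponentially distributed random variables with means a > 0 and b > 0, and define C_s = max(0, log₂(1+X) − log₂(1+Y)). Then the expected value of C_s equals the integral over R from 0 to ∞ of (a/(a + 2^R·b)) · exp(−(2^R − 1)/a) dR. -/

import Mathlib

open MeasureTheory ProbabilityTheory Real Set

/-!
By the layer-cake formula, `E[C_s] = ∫_{R>0} P(C_s > R) dR`. For `R ≥ 0` and nonnegative `X, Y`,
`C_s > R` holds exactly when `X > 2^R - 1 + 2^R Y`. Conditioning on `Y` and using the exponential
tail of `X` gives `P(C_s > R) = exp(-(2^R - 1)/a) · E[exp(-2^R Y / a)]`, and the Laplace transform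
of `Y` at `2^R / a` is `a / (a + 2^R b)`.
-/

lemma expMeasure_Iio_zero (r : ℝ) : expMeasure r (Iio 0) = 0 := by
  rw [expMeasure, gammaMeasure, withDensity_apply _ measurableSet_Iio]
  exact lintegral_gammaPDF_of_nonpos le_rfl

lemma ae_nonneg_expMeasure (r : ℝ) : ∀ᵐ x ∂expMeasure r, 0 ≤ x := by
  refine ae_iff.2 ?_
  simp only [not_le]
  exact expMeasure_Iio_zero r

lemma expMeasure_Ioi {r m : ℝ} (hr : 0 < r) (hm : 0 ≤ m) :
    expMeasure r (Ioi m) = ENNReal.ofReal (exp (-(r * m))) := by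
  have := isProbabilityMeasure_expMeasure hr
  have hexp : exp (-(r * m)) ≤ 1 := exp_le_one_iff.2 (by nlinarith)
  rw [← compl_Iic, prob_compl_eq_one_sub measurableSet_Iic, ← ofReal_cdf, cdf_expMeasure_eq hr,
    if_pos hm, ← ENNReal.ofReal_one, ← ENNReal.ofReal_sub _ (by linarith), sub_sub_cancel]

lemma lintegral_exp_neg_mul_expMeasure {r k : ℝ} (hr : 0 ≤ r) (hrk : 0 < r + k) :
    ∫⁻ y, ENNReal.ofReal (exp (-(k * y))) ∂expMeasure r = ENNReal.ofReal (r / (r + k)) := by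
  have hdensity : ∀ y, exponentialPDF r y * ENNReal.ofReal (exp (-(k * y)))
      = ENNReal.ofReal (r / (r + k)) * exponentialPDF (r + k) y := by
    intro y
    rcases lt_or_ge y 0 with hy | hy
    · simp [exponentialPDF_of_neg hy]
    · rw [exponentialPDF_of_nonneg hy, exponentialPDF_of_nonneg hy,
        ← ENNReal.ofReal_mul (by positivity), ← ENNReal.ofReal_mul (by positivity), mul_assoc,
        ← exp_add]
      congr 1
      field_simp
      ring_nf
  have hpdf : Measurable (exponentialPDF r) := (measurable_exponentialPDFReal r).ennreal_ofReal
  change ∫⁻ y, ENNReal.ofReal (exp (-(k * y))) ∂volume.withDensity (exponentialPDF r) = _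
  rw [lintegral_withDensity_eq_lintegral_mul _ hpdf (by fun_prop)]
  simp only [Pi.mul_apply, hdensity]
  rw [lintegral_const_mul' _ _ ENNReal.ofReal_ne_top,
    lintegral_exponentialPDF_eq_one hrk, mul_one]

lemma expMeasure_prod_expMeasure_add_mul_lt {r s c d : ℝ} (hr : 0 < r) (hs : 0 < s)
    (hc : 0 ≤ c) (hd : 0 ≤ d) :
    (expMeasure s).prod (expMeasure r) {p : ℝ × ℝ | c + d * p.1 < p.2}
      = ENNReal.ofReal (exp (-(r * c)) * (s / (s + r * d))) := by
  have := isProbabilityMeasure_expMeasure hr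
  have := isProbabilityMeasure_expMeasure hs
  rw [Measure.prod_apply (measurableSet_lt (by fun_prop) measurable_snd)]
  calc ∫⁻ y, expMeasure r (Ioi (c + d * y)) ∂expMeasure s
      = ∫⁻ y, ENNReal.ofReal (exp (-(r * c))) * ENNReal.ofReal (exp (-(r * d * y)))
          ∂expMeasure s := by
        refine lintegral_congr_ae ?_
        filter_upwards [ae_nonneg_expMeasure s] with y hy
        rw [expMeasure_Ioi hr (by positivity), ← ENNReal.ofReal_mul (exp_pos _).le, ← exp_add]
        ring_nf
    _ = ENNReal.ofReal (exp (-(r * c)) * (s / (s + r * d))) := by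
        rw [lintegral_const_mul' _ _ ENNReal.ofReal_ne_top,
          lintegral_exp_neg_mul_expMeasure hs.le (by positivity),
          ← ENNReal.ofReal_mul (exp_pos _).le]

lemma measure_add_mul_lt_of_indepFun {Ω : Type*} [MeasurableSpace Ω] {μ : Measure Ω}
    [IsFiniteMeasure μ] {X Y : Ω → ℝ} {r s c d : ℝ} (hr : 0 < r) (hs : 0 < s) (hc : 0 ≤ c)
    (hd : 0 ≤ d) (hXm : Measurable X) (hYm : Measurable Y) (hindep : IndepFun X Y μ)
    (hX : μ.map X = expMeasure r) (hY : μ.map Y = expMeasure s) :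
    μ {ω | c + d * Y ω < X ω} = ENNReal.ofReal (exp (-(r * c)) * (s / (s + r * d))) := by
  have hjoint : μ.map (fun ω => (Y ω, X ω)) = (expMeasure s).prod (expMeasure r) := by
    rw [← hY, ← hX]
    exact (indepFun_iff_map_prod_eq_prod_map_map hYm.aemeasurable hXm.aemeasurable).1 hindep.symm
  rw [← expMeasure_prod_expMeasure_add_mul_lt hr hs hc hd, ← hjoint,
    Measure.map_apply (hYm.prodMk hXm) (measurableSet_lt (by fun_prop) measurable_snd)]
  rfl

lemma lt_logb_sub_logb_iff {b u v R : ℝ} (hb : 1 < b) (hu : 0 < u) (hv : 0 < v) :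
    R < logb b u - logb b v ↔ b ^ R * v < u := by
  rw [lt_sub_iff_add_lt, lt_logb_iff_rpow_lt hb hu, rpow_add (by linarith),
    rpow_logb (by linarith) hb.ne' hv]

noncomputable def secrecyCapacity (x y : ℝ) : ℝ := max 0 (logb 2 (1 + x) - logb 2 (1 + y))

lemma lt_secrecyCapacity_iff {x y R : ℝ} (hR : 0 ≤ R) (hx : -1 < x) (hy : -1 < y) :
    R < secrecyCapacity x y ↔ 2 ^ R - 1 + 2 ^ R * y < x := by
  rw [secrecyCapacity, lt_max_iff, or_iff_right hR.not_gt,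
    lt_logb_sub_logb_iff one_lt_two (by linarith) (by linarith), mul_add, mul_one]
  constructor <;> intro h <;> linarith

lemma measurable_secrecyCapacity : Measurable fun p : ℝ × ℝ => secrecyCapacity p.1 p.2 := by
  unfold secrecyCapacity logb
  fun_prop

lemma measure_lt_secrecyCapacity {Ω : Type*} [MeasurableSpace Ω] {μ : Measure Ω}
    [IsFiniteMeasure μ] {X Y : Ω → ℝ} {a b R : ℝ} (ha : 0 < a) (hb : 0 < b) (hR : 0 ≤ R)
    (hXm : Measurable X) (hYm : Measurable Y) (hindep : IndepFun X Y μ)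
    (hX : μ.map X = expMeasure (1 / a)) (hY : μ.map Y = expMeasure (1 / b)) :
    μ {ω | R < secrecyCapacity (X ω) (Y ω)}
      = ENNReal.ofReal (a / (a + 2 ^ R * b) * exp (-(2 ^ R - 1) / a)) := by
  have hX0 : ∀ᵐ ω ∂μ, 0 ≤ X ω :=
    ae_of_ae_map hXm.aemeasurable (hX ▸ ae_nonneg_expMeasure _)
  have hY0 : ∀ᵐ ω ∂μ, 0 ≤ Y ω :=
    ae_of_ae_map hYm.aemeasurable (hY ▸ ae_nonneg_expMeasure _)
  have h2R : 1 ≤ (2 : ℝ) ^ R := one_le_rpow one_le_two hR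
  calc μ {ω | R < secrecyCapacity (X ω) (Y ω)} = μ {ω | 2 ^ R - 1 + 2 ^ R * Y ω < X ω} := by
        refine measure_congr (Filter.eventuallyEq_set.2 ?_)
        filter_upwards [hX0, hY0] with ω hx hy
        exact lt_secrecyCapacity_iff hR (by linarith) (by linarith)
    _ = ENNReal.ofReal (exp (-(1 / a * (2 ^ R - 1))) * (1 / b / (1 / b + 1 / a * 2 ^ R))) :=
        measure_add_mul_lt_of_indepFun (by positivity) (by positivity) (by linarith)
          (by positivity) hXm hYm hindep hX hY
    _ = ENNReal.ofReal (a / (a + 2 ^ R * b) * exp (-(2 ^ R - 1) / a)) := by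
        congr 1
        rw [mul_comm]
        congr 1
        · field_simp
        · ring_nf

lemma integral_eq_setIntegral_Ioi_of_meas_lt {α : Type*} [MeasurableSpace α] {μ : Measure α}
    {f : α → ℝ} {g : ℝ → ℝ} (hf_nn : 0 ≤ᵐ[μ] f) (hf : AEMeasurable f μ)
    (hg_nn : 0 ≤ᵐ[volume.restrict (Ioi 0)] g)
    (hg : AEStronglyMeasurable g (volume.restrict (Ioi 0)))
    (htail : ∀ t, 0 < t → μ {x | t < f x} = ENNReal.ofReal (g t)) :
    ∫ x, f x ∂μ = ∫ t in Ioi 0, g t := by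
  rw [integral_eq_lintegral_of_nonneg_ae hf_nn hf.aestronglyMeasurable,
    integral_eq_lintegral_of_nonneg_ae hg_nn hg, lintegral_eq_lintegral_meas_lt μ hf_nn hf,
    setLIntegral_congr_fun measurableSet_Ioi htail]

/-- Average secrecy rate with perfect CSI: for independent exponential random variables
`X` (mean `a`) and `Y` (mean `b`) and secrecy capacity
`C_s = max 0 (log₂(1+X) - log₂(1+Y))`,
`E[C_s] = ∫₀^∞ (a/(a + 2^R b)) exp(-(2^R - 1)/a) dR`. -/
theorem average_secrecy_rate
    {Ω : Type*} [MeasureSpace Ω] [IsProbabilityMeasure (ℙ : Measure Ω)]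
    (X Y : Ω → ℝ) (a b : ℝ) (ha : 0 < a) (hb : 0 < b)
    (hXm : Measurable X) (hYm : Measurable Y)
    (hindep : IndepFun X Y ℙ)
    (hX : Measure.map X ℙ = expMeasure (1 / a))
    (hY : Measure.map Y ℙ = expMeasure (1 / b)) :
    ∫ ω, max 0 (logb 2 (1 + X ω) - logb 2 (1 + Y ω)) ∂ℙ
      = ∫ R in Set.Ioi (0 : ℝ),
          a / (a + 2 ^ R * b) * Real.exp (-(2 ^ R - 1) / a) := by
  change ∫ ω, secrecyCapacity (X ω) (Y ω) ∂ℙ = _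
  refine integral_eq_setIntegral_Ioi_of_meas_lt (ae_of_all _ fun ω => le_max_left _ _)
    (measurable_secrecyCapacity.comp (hXm.prodMk hYm)).aemeasurable
    (ae_of_all _ fun R => by positivity) (by fun_prop : Measurable _).aestronglyMeasurable
    fun R hR => measure_lt_secrecyCapacity ha hb hR.le hXm hYm hindep hX hY
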